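/- The function h(k) := 7k²(k - sin(k)) - 40(sin(k) - k + k³/6) is nonnegative for all k ≥ 0. -/
import Mathlib

lemma aux_nonneg (f g : ℝ → ℝ) (hf : ∀ x, HasDerivAt f (g x) x) (h0 : f 0 = 0)
    (hg : ∀ x, 0 ≤ x → 0 ≤ g x) : ∀ x, 0 ≤ x → 0 ≤ f x := by
  intro x hx
  have hmono : MonotoneOn f (Set.Ici (0:ℝ)) := by
    apply monotoneOn_of_deriv_nonneg (convex_Ici 0)
      (fun y _ => (hf y).continuousAt.continuousWithinAt)
      (fun y _ => (hf y).differentiableAt.differentiableWithinAt)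
    intro y hy
    rw [interior_Ici] at hy
    rw [(hf y).deriv]
    exact hg y hy.le
  have := hmono Set.self_mem_Ici hx hx
  simpa [h0] using this

lemma A2 : ∀ x : ℝ, 0 ≤ x → 0 ≤ Real.sin x - x + x ^ 3 / 6 := by
  apply aux_nonneg _ (fun x => Real.cos x - 1 + x ^ 2 / 2)
  · intro x
    have h : HasDerivAt (fun x : ℝ => Real.sin x - x + x ^ 3 / 6)
        (Real.cos x - 1 + (↑(3:ℕ) * x ^ (3-1)) / 6) x :=
      ((Real.hasDerivAt_sin x).sub (hasDerivAt_id x)).add ((hasDerivAt_pow 3 x).div_const 6)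
    convert h using 1
    push_cast; ring
  · simp
  · intro x _; nlinarith [Real.one_sub_sq_div_two_le_cos (x := x)]

lemma A3 : ∀ x : ℝ, 0 ≤ x → 0 ≤ 1 - x ^ 2 / 2 + x ^ 4 / 24 - Real.cos x := by
  apply aux_nonneg _ (fun x => Real.sin x - x + x ^ 3 / 6)
  · intro x
    have h : HasDerivAt (fun x : ℝ => 1 - x ^ 2 / 2 + x ^ 4 / 24 - Real.cos x)
        (0 - (↑(2:ℕ) * x ^ (2-1)) / 2 + (↑(4:ℕ) * x ^ (4-1)) / 24 - (-Real.sin x)) x :=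
      (((hasDerivAt_const x (1:ℝ)).sub ((hasDerivAt_pow 2 x).div_const 2)).add
        ((hasDerivAt_pow 4 x).div_const 24)).sub (Real.hasDerivAt_cos x)
    convert h using 1
    push_cast; ring
  · simp
  · exact A2

lemma A4 : ∀ x : ℝ, 0 ≤ x → 0 ≤ x - x ^ 3 / 6 + x ^ 5 / 120 - Real.sin x := by
  apply aux_nonneg _ (fun x => 1 - x ^ 2 / 2 + x ^ 4 / 24 - Real.cos x)
  · intro x
    have h : HasDerivAt (fun x : ℝ => x - x ^ 3 / 6 + x ^ 5 / 120 - Real.sin x)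
        (1 - (↑(3:ℕ) * x ^ (3-1)) / 6 + (↑(5:ℕ) * x ^ (5-1)) / 120 - Real.cos x) x :=
      (((hasDerivAt_id x).sub ((hasDerivAt_pow 3 x).div_const 6)).add
        ((hasDerivAt_pow 5 x).div_const 120)).sub (Real.hasDerivAt_sin x)
    convert h using 1
    push_cast; ring
  · simp
  · exact A3

lemma A5 : ∀ x : ℝ, 0 ≤ x → 0 ≤ Real.cos x - (1 - x ^ 2 / 2 + x ^ 4 / 24 - x ^ 6 / 720) := by
  apply aux_nonneg _ (fun x => x - x ^ 3 / 6 + x ^ 5 / 120 - Real.sin x)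
  · intro x
    have h : HasDerivAt (fun x : ℝ => Real.cos x - (1 - x ^ 2 / 2 + x ^ 4 / 24 - x ^ 6 / 720))
        ((-Real.sin x) - (0 - (↑(2:ℕ) * x ^ (2-1)) / 2 + (↑(4:ℕ) * x ^ (4-1)) / 24
          - (↑(6:ℕ) * x ^ (6-1)) / 720)) x :=
      (Real.hasDerivAt_cos x).sub ((((hasDerivAt_const x (1:ℝ)).sub
        ((hasDerivAt_pow 2 x).div_const 2)).add ((hasDerivAt_pow 4 x).div_const 24)).sub
        ((hasDerivAt_pow 6 x).div_const 720))
    convert h using 1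
    push_cast; ring
  · simp
  · exact A4

lemma A6 : ∀ x : ℝ, 0 ≤ x → 0 ≤ Real.sin x - (x - x ^ 3 / 6 + x ^ 5 / 120 - x ^ 7 / 5040) := by
  apply aux_nonneg _ (fun x => Real.cos x - (1 - x ^ 2 / 2 + x ^ 4 / 24 - x ^ 6 / 720))
  · intro x
    have h : HasDerivAt (fun x : ℝ => Real.sin x - (x - x ^ 3 / 6 + x ^ 5 / 120 - x ^ 7 / 5040))
        (Real.cos x - (1 - (↑(3:ℕ) * x ^ (3-1)) / 6 + (↑(5:ℕ) * x ^ (5-1)) / 120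
          - (↑(7:ℕ) * x ^ (7-1)) / 5040)) x :=
      (Real.hasDerivAt_sin x).sub ((((hasDerivAt_id x).sub
        ((hasDerivAt_pow 3 x).div_const 6)).add ((hasDerivAt_pow 5 x).div_const 120)).sub
        ((hasDerivAt_pow 7 x).div_const 5040))
    convert h using 1
    push_cast; ring
  · simp
  · exact A5

lemma A7 : ∀ x : ℝ, 0 ≤ x →
    0 ≤ (1 - x ^ 2 / 2 + x ^ 4 / 24 - x ^ 6 / 720 + x ^ 8 / 40320) - Real.cos x := by
  apply aux_nonneg _ (fun x => Real.sin x - (x - x ^ 3 / 6 + x ^ 5 / 120 - x ^ 7 / 5040))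
  · intro x
    have h : HasDerivAt
        (fun x : ℝ => (1 - x ^ 2 / 2 + x ^ 4 / 24 - x ^ 6 / 720 + x ^ 8 / 40320) - Real.cos x)
        ((0 - (↑(2:ℕ) * x ^ (2-1)) / 2 + (↑(4:ℕ) * x ^ (4-1)) / 24
          - (↑(6:ℕ) * x ^ (6-1)) / 720 + (↑(8:ℕ) * x ^ (8-1)) / 40320) - (-Real.sin x)) x :=
      (((((hasDerivAt_const x (1:ℝ)).sub ((hasDerivAt_pow 2 x).div_const 2)).add
        ((hasDerivAt_pow 4 x).div_const 24)).sub ((hasDerivAt_pow 6 x).div_const 720)).add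
        ((hasDerivAt_pow 8 x).div_const 40320)).sub (Real.hasDerivAt_cos x)
    convert h using 1
    push_cast; ring
  · simp
  · exact A6

lemma q8_bound (z : ℝ) (hz1 : (0.396:ℝ) ≤ z) (hz2 : z ≤ 4.4461) : Real.cos z ≤ 0.94 := by
  have hq := A7 z (by linarith)
  nlinarith [mul_nonneg (sub_nonneg.2 hz1) (sub_nonneg.2 hz2), sq_nonneg (z^2 - 9),
    sq_nonneg (z^2-4), sq_nonneg z,
    mul_nonneg (mul_nonneg (sub_nonneg.2 hz1) (sub_nonneg.2 hz2)) (sq_nonneg (z^2-9)),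
    mul_nonneg (mul_nonneg (sub_nonneg.2 hz1) (sub_nonneg.2 hz2)) (sq_nonneg z)]

lemma sin_bound_mid (k : ℝ) (h1 : (8.25:ℝ) ≤ k) (h2 : k ≤ 12.3) : Real.sin k ≤ 0.94 := by
  have hπl : (3.141592:ℝ) < Real.pi := Real.pi_gt_d6
  have hπu : Real.pi < 3.141593 := Real.pi_lt_d6
  have hsc : Real.sin k = Real.cos (k - Real.pi / 2 - 2 * Real.pi) := by
    rw [Real.cos_sub_two_pi, Real.cos_sub_pi_div_two]
  rw [hsc]
  apply q8_bound
  · linarith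
  · linarith

theorem stmt_4 (k : ℝ) (hk : 0 ≤ k) :
    0 ≤ 7 * k ^ 2 * (k - Real.sin k) - 40 * (Real.sin k - k + k ^ 3 / 6) := by
  have h40 : (0:ℝ) < 7*k^2 + 40 := by positivity
  rcases le_or_gt k 3.7 with h2 | h2
  · have hs : Real.sin k ≤ k - k^3/6 + k^5/120 := by have := A4 k hk; linarith
    have key : (7*k^2+40) * Real.sin k ≤ (7*k^2+40) * (k - k^3/6 + k^5/120) :=
      mul_le_mul_of_nonneg_left hs h40.le
    nlinarith [mul_nonneg (mul_nonneg (mul_nonneg (mul_nonneg hk hk) hk) hk) hk,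
      mul_nonneg (sub_nonneg.2 h2)
        (mul_nonneg (mul_nonneg (mul_nonneg (mul_nonneg (mul_nonneg hk hk) hk) hk) hk) hk)]
  · rcases le_or_gt k 8.25 with h3 | h3
    · have hs : Real.sin k ≤ 1 := Real.sin_le_one k
      have key : (7*k^2+40) * Real.sin k ≤ (7*k^2+40) * 1 := mul_le_mul_of_nonneg_left hs h40.le
      have h1 : (3.7:ℝ) ≤ k := h2.le
      nlinarith [mul_nonneg (sub_nonneg.2 h1) (sub_nonneg.2 h3), sq_nonneg (k - 8.25),
        mul_nonneg (mul_nonneg (sub_nonneg.2 h1) (sub_nonneg.2 h3)) (sub_nonneg.2 h3),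
        mul_nonneg (mul_nonneg (sub_nonneg.2 h1) (sub_nonneg.2 h3)) (sub_nonneg.2 h1)]
    · rcases le_or_gt k 12.3 with h4 | h4
      · have hs : Real.sin k ≤ 0.94 := sin_bound_mid k h3.le h4
        have key : (7*k^2+40) * Real.sin k ≤ (7*k^2+40) * 0.94 :=
          mul_le_mul_of_nonneg_left hs h40.le
        have h1 : (8.25:ℝ) ≤ k := h3.le
        nlinarith [mul_nonneg (sub_nonneg.2 h1) (sub_nonneg.2 h4),
          mul_nonneg (mul_nonneg (sub_nonneg.2 h1) (sub_nonneg.2 h4)) (sub_nonneg.2 h4),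
          mul_nonneg (mul_nonneg (sub_nonneg.2 h1) (sub_nonneg.2 h4)) (sub_nonneg.2 h1)]
      · have hs : Real.sin k ≤ 1 := Real.sin_le_one k
        have key : (7*k^2+40) * Real.sin k ≤ (7*k^2+40) * 1 := mul_le_mul_of_nonneg_left hs h40.le
        have h1 : (12.3:ℝ) ≤ k := h4.le
        nlinarith [sq_nonneg (k - 12.3), mul_nonneg (sub_nonneg.2 h1) (sq_nonneg (k-12.3)),
          sub_nonneg.2 h1]
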